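/- Let O ⊆ ℝ^d be an open set and let S ⊆ O be compact. Then ℝ^d∖infill_O S has only finitely many connected components. -/

import Mathlib

open MeasureTheory Metric Set Filter
open scoped ENNReal Topology OnePoint

noncomputable section

/-- `d`-dimensional Euclidean space. -/
abbrev Euc (d : ℕ) : Type := EuclideanSpace ℝ (Fin d)

/-- A real-valued function is *harmonic on a set* if it is continuous there and satisfies
the mean value equality over every closed ball contained in the set. -/
def HarmOn {d : ℕ} (h : Euc d → ℝ) (O : Set (Euc d)) : Prop :=
  ContinuousOn h O ∧
    ∀ x : Euc d, ∀ r : ℝ, 0 < r → closedBall x r ⊆ O →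
      h x = ⨍ y in closedBall x r, h y ∂volume

/-- An `EReal`-valued function is *subharmonic on a set* if it is upper semicontinuous there,
nowhere `+∞` there, and on every closed ball contained in the set it is dominated by each
continuous function harmonic in the interior that dominates it on the boundary sphere. -/
def SbhOn {d : ℕ} (u : Euc d → EReal) (O : Set (Euc d)) : Prop :=
  UpperSemicontinuousOn u O ∧ (∀ x ∈ O, u x < ⊤) ∧
    ∀ x : Euc d, ∀ r : ℝ, 0 < r → closedBall x r ⊆ O →
      ∀ h : Euc d → ℝ, ContinuousOn h (closedBall x r) → HarmOn h (ball x r) →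
        (∀ y ∈ sphere x r, u y ≤ (h y : EReal)) →
        ∀ y ∈ closedBall x r, u y ≤ (h y : EReal)

/-- The positive part of an extended real number, as a member of `ℝ≥0∞`. -/
def erealPos (x : EReal) : ℝ≥0∞ := if x = ⊤ then ⊤ else ENNReal.ofReal x.toReal

/-- The integral of an `EReal`-valued function against a measure, with values in `EReal`:
the lower integral of the positive part minus the lower integral of the negative part. -/
def eInt {d : ℕ} (μ : Measure (Euc d)) (u : Euc d → EReal) : EReal :=
  ((∫⁻ x, erealPos (u x) ∂μ : ℝ≥0∞) : EReal) -
    ((∫⁻ x, erealPos (-(u x)) ∂μ : ℝ≥0∞) : EReal)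

/-- The (closed) support of a measure: points all of whose open neighbourhoods
have strictly positive measure. -/
def msupp {d : ℕ} (μ : Measure (Euc d)) : Set (Euc d) :=
  {x | ∀ U : Set (Euc d), IsOpen U → x ∈ U → 0 < μ U}

/-- A finite positive Borel measure whose support is a compact subset of `O`. -/
def MeasCompIn {d : ℕ} (μ : Measure (Euc d)) (O : Set (Euc d)) : Prop :=
  IsCompact (msupp μ) ∧ msupp μ ⊆ O ∧ μ (msupp μ)ᶜ = 0 ∧ μ Set.univ < ⊤

/-- The *inward filling* of `S` with respect to `O`: the union of `S` with all connected
components of `O \ S` that are relatively compact in `O`. -/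
def infill {X : Type*} [TopologicalSpace X] (O S : Set X) : Set X :=
  S ∪ {y | ∃ x ∈ O \ S, y ∈ connectedComponentIn (O \ S) x ∧
      IsCompact (closure (connectedComponentIn (O \ S) x)) ∧
      closure (connectedComponentIn (O \ S) x) ⊆ O}

/-
Write `K = infill O S`. If `D` is a component of `O \ S` with compact closure inside `O`, then
`closure D \ D ⊆ S`, so a preconnected set that misses `S` and meets `D` stays inside `D`.
Applied to rays and to short segments, this shows that `K` stays in any ball `closedBall 0 R`
containing `S`, and at distance at least `δ` from `Oᶜ` when `thickening δ S ⊆ O`. Hence the compact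
set `T = closedBall 0 (R + 1) \ (O ∩ ball 0 (R + 1))` lies in the interior of `Kᶜ`. Every component
of `Kᶜ` meets `T`: one reaching beyond radius `R` reaches the sphere of radius `R + 1`, and one
inside `closedBall 0 R` and inside `O` would contain a component of `O \ S` with compact closure in
`O`, which is part of `K`. Finitely many open components of `interior Kᶜ` cover `T`, and each
component of `Kᶜ` contains one of them.
-/

section Topology

variable {X : Type*} [TopologicalSpace X]

theorem closure_connectedComponentIn_inter_subset {F : Set X} {x : X} :
    closure (connectedComponentIn F x) ∩ F ⊆ connectedComponentIn F x := by
  by_cases hx : x ∈ F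
  · have hpre : IsPreconnected
        (connectedComponentIn F x ∪ closure (connectedComponentIn F x) ∩ F) :=
      isPreconnected_connectedComponentIn.subset_closure subset_union_left
        (union_subset subset_closure inter_subset_left)
    exact fun z hz => hpre.subset_connectedComponentIn (Or.inl (mem_connectedComponentIn hx))
      (union_subset (connectedComponentIn_subset F x) inter_subset_right) (Or.inr hz)
  · simp [connectedComponentIn_eq_empty hx]

theorem mem_infill_iff {O S : Set X} {y : X} :
    y ∈ infill O S ↔ y ∈ S ∨ y ∈ O \ S ∧ IsCompact (closure (connectedComponentIn (O \ S) y)) ∧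
      closure (connectedComponentIn (O \ S) y) ⊆ O := by
  refine or_congr Iff.rfl ⟨?_, fun ⟨hy, hc, hO⟩ => ⟨y, hy, mem_connectedComponentIn hy, hc, hO⟩⟩
  rintro ⟨x, -, hyx, hc, hO⟩
  rw [connectedComponentIn_eq hyx] at hc hO
  exact ⟨connectedComponentIn_subset _ _ hyx, hc, hO⟩

theorem infill_subset {O S : Set X} (hSO : S ⊆ O) : infill O S ⊆ O :=
  fun _ hy => (mem_infill_iff.1 hy).elim (hSO ·) (·.1.1)

theorem subset_connectedComponentIn_of_mem_infill [LocallyConnectedSpace X]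
    {O S P : Set X} (hO : IsOpen O) (hS : IsClosed S) (hP : IsPreconnected P)
    (hPS : Disjoint P S) {y : X} (hyP : y ∈ P) (hyK : y ∈ infill O S) :
    P ⊆ connectedComponentIn (O \ S) y := by
  obtain ⟨hyW, -, hDO⟩ := (mem_infill_iff.1 hyK).resolve_left (hPS.notMem_of_mem_left hyP)
  -- `D` and `(closure D)ᶜ` cover `P`, because `closure D \ D ⊆ S`.
  refine hP.subset_left_of_subset_union (hO.sdiff hS).connectedComponentIn
    isClosed_closure.isOpen_compl (disjoint_compl_right.mono_right (compl_subset_compl.2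
    subset_closure)) (fun z hzP => ?_) ⟨y, hyP, mem_connectedComponentIn hyW⟩
  by_cases hz : z ∈ closure (connectedComponentIn (O \ S) y)
  · exact Or.inl (closure_connectedComponentIn_inter_subset
      ⟨hz, hDO hz, hPS.notMem_of_mem_left hzP⟩)
  · exact Or.inr hz

theorem exists_mem_connectedComponentIn_compl_infill_notMem {O S : Set X} (hSO : S ⊆ O) {x : X}
    (hx : x ∉ infill O S)
    (hC : IsCompact (closure (connectedComponentIn (infill O S)ᶜ x))) :
    ∃ p ∈ connectedComponentIn (infill O S)ᶜ x, p ∉ O := by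
  by_contra! hCO
  have hxW : x ∈ O \ S := ⟨hCO x (mem_connectedComponentIn hx), fun h => hx (Or.inl h)⟩
  have hDK : connectedComponentIn (O \ S) x ⊆ (infill O S)ᶜ := by
    intro y hy hyK
    refine hx (mem_infill_iff.2 (Or.inr ⟨hxW, ?_⟩))
    rcases mem_infill_iff.1 hyK with hyS | ⟨-, hDy⟩
    · exact ((connectedComponentIn_subset _ _ hy).2 hyS).elim
    · rwa [connectedComponentIn_eq hy]
  have hDC := closure_mono (isPreconnected_connectedComponentIn.subset_connectedComponentIn
    (mem_connectedComponentIn hxW) hDK)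
  have hCO' : closure (connectedComponentIn (infill O S)ᶜ x) ⊆ O := fun w hw => by
    by_cases hwK : w ∈ infill O S
    · exact infill_subset hSO hwK
    · exact hCO w (closure_connectedComponentIn_inter_subset ⟨hw, hwK⟩)
  exact hx (mem_infill_iff.2 (Or.inr
    ⟨hxW, hC.of_isClosed_subset isClosed_closure hDC, hDC.trans hCO'⟩))

theorem finite_connectedComponentIn_of_isCompact [LocallyConnectedSpace X] {F T : Set X}
    (hT : IsCompact T) (hTF : T ⊆ interior F)
    (hmeet : ∀ x ∈ F, ∃ p ∈ T, p ∈ connectedComponentIn F x) :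
    {C : Set X | ∃ x ∈ F, C = connectedComponentIn F x}.Finite := by
  obtain ⟨t, -, hcover⟩ := hT.elim_nhds_subcover (connectedComponentIn (interior F))
    fun p hp => isOpen_interior.connectedComponentIn.mem_nhds (mem_connectedComponentIn (hTF hp))
  refine (t.finite_toSet.image (connectedComponentIn F)).subset ?_
  rintro _ ⟨x, hx, rfl⟩
  obtain ⟨p, hpT, hpx⟩ := hmeet x hx
  obtain ⟨c, hct, hpc⟩ := mem_iUnion₂.1 (hcover hpT)
  exact ⟨c, hct, (connectedComponentIn_eq
    (connectedComponentIn_mono c interior_subset hpc)).trans (connectedComponentIn_eq hpx).symm⟩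

end Topology

section NormedSpace

variable {E : Type*} [NormedAddCommGroup E] [NormedSpace ℝ E]

theorem infill_subset_closedBall {O S : Set E} (hO : IsOpen O) (hS : IsClosed S) {R : ℝ}
    (hR : 0 ≤ R) (hSR : S ⊆ closedBall 0 R) : infill O S ⊆ closedBall 0 R := by
  intro z hz
  by_contra hzR
  have hzR' : R < ‖z‖ := by simpa using hzR
  set P := (fun t : ℝ => t • z) '' Ici 1
  have hnorm : ∀ t : ℝ, 0 ≤ t → ‖t • z‖ = t * ‖z‖ := fun t ht => by
    rw [norm_smul, Real.norm_of_nonneg ht]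
  have hPS : Disjoint P S := by
    refine Set.disjoint_left.2 ?_
    rintro _ ⟨t, ht, rfl⟩ htS
    have := mem_closedBall_zero_iff.1 (hSR htS)
    rw [hnorm t (zero_le_one.trans ht)] at this
    nlinarith [mem_Ici.1 ht]
  have hPK := subset_connectedComponentIn_of_mem_infill hO hS
    (isPreconnected_Ici.image _ (by fun_prop)) hPS ⟨1, self_mem_Ici, one_smul ℝ z⟩ hz
  obtain ⟨-, hc, -⟩ := (mem_infill_iff.1 hz).resolve_left
    (hPS.notMem_of_mem_left ⟨1, self_mem_Ici, one_smul ℝ z⟩)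
  obtain ⟨C, hC⟩ := (hc.isBounded.subset (hPK.trans subset_closure)).exists_norm_le
  have hz0 : 0 < ‖z‖ := hR.trans_lt hzR'
  have ht : (1 : ℝ) ≤ (|C| + 1) / ‖z‖ + 1 := by
    have : 0 ≤ (|C| + 1) / ‖z‖ := by positivity
    linarith
  have := hC _ ⟨_, ht, rfl⟩
  rw [hnorm _ (zero_le_one.trans ht), add_mul, div_mul_cancel₀ _ hz0.ne'] at this
  linarith [le_abs_self C]

theorem infill_disjoint_thickening_compl {O S : Set E} (hO : IsOpen O) (hS : IsClosed S) {δ : ℝ}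
    (hδ : thickening δ S ⊆ O) : Disjoint (infill O S) (thickening δ Oᶜ) := by
  refine Set.disjoint_left.2 fun z hz hzδ => ?_
  obtain ⟨q, hqO, hzq⟩ := mem_thickening_iff.1 hzδ
  have hseg : segment ℝ z q ⊆ ball q δ := (convex_ball q δ).segment_subset
    (mem_ball.2 hzq) (mem_ball_self (dist_nonneg.trans_lt hzq))
  have hPS : Disjoint (segment ℝ z q) S := Set.disjoint_left.2 fun w hw hwS =>
    hqO (hδ (mem_thickening_iff.2 ⟨w, hwS, mem_ball'.1 (hseg hw)⟩))
  have hsegD := subset_connectedComponentIn_of_mem_infill hO hS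
    (convex_segment z q).isPreconnected hPS (left_mem_segment ℝ z q) hz
  exact hqO (connectedComponentIn_subset _ _ (hsegD (right_mem_segment ℝ z q))).1

theorem exists_norm_eq_mem_connectedComponentIn {F : Set E} {R r : ℝ} (hR : 0 ≤ R)
    (hF : (closedBall 0 R)ᶜ ⊆ F) {q : E} (hq : R < ‖q‖) (hr : R < r) :
    ∃ p ∈ connectedComponentIn F q, ‖p‖ = r := by
  have hq0 : 0 < ‖q‖ := hR.trans_lt hq
  set c := r / ‖q‖
  have hc : 0 < c := div_pos (hR.trans_lt hr) hq0
  have hP : (fun t : ℝ => t • q) '' uIcc 1 c ⊆ F := by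
    rintro _ ⟨t, ht, rfl⟩
    apply hF
    rw [mem_compl_iff, mem_closedBall_zero_iff, not_le, norm_smul]
    have hmin : R < min 1 c * ‖q‖ := by
      rcases min_cases 1 c with ⟨h, -⟩ | ⟨h, -⟩ <;> rw [h]
      · linarith
      · rwa [div_mul_cancel₀ _ hq0.ne']
    have ht' : min 1 c ≤ t := ht.1
    have : 0 < t := (lt_min one_pos hc).trans_le ht'
    rw [Real.norm_of_nonneg this.le]
    nlinarith
  refine ⟨c • q, (isPreconnected_uIcc.image _ (by fun_prop)).subset_connectedComponentIn
    ⟨1, left_mem_uIcc, one_smul ℝ q⟩ hP ⟨c, right_mem_uIcc, rfl⟩, ?_⟩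
  rw [norm_smul, Real.norm_of_nonneg hc.le, div_mul_cancel₀ _ hq0.ne']

theorem exists_mem_connectedComponentIn_compl_infill [ProperSpace E] {O S : Set E} (hSO : S ⊆ O)
    {R : ℝ} (hR : 0 ≤ R) (hKR : infill O S ⊆ closedBall 0 R) {x : E} (hx : x ∉ infill O S) :
    ∃ p ∈ closedBall (0 : E) (R + 1) \ (O ∩ ball 0 (R + 1)),
      p ∈ connectedComponentIn (infill O S)ᶜ x := by
  by_cases hfar : ∃ q ∈ connectedComponentIn (infill O S)ᶜ x, R < ‖q‖
  · obtain ⟨q, hqC, hq⟩ := hfar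
    obtain ⟨p, hpC, hp⟩ := exists_norm_eq_mem_connectedComponentIn hR
      (compl_subset_compl.2 hKR) hq (lt_add_one R)
    rw [connectedComponentIn_eq hqC]
    exact ⟨p, ⟨mem_closedBall_zero_iff.2 hp.le, fun h => (mem_ball_zero_iff.1 h.2).ne hp⟩, hpC⟩
  · push Not at hfar
    have hCR : connectedComponentIn (infill O S)ᶜ x ⊆ closedBall 0 R :=
      fun q hq => mem_closedBall_zero_iff.2 (hfar q hq)
    obtain ⟨p, hpC, hpO⟩ := exists_mem_connectedComponentIn_compl_infill_notMem hSO hx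
      ((isCompact_closedBall 0 R).of_isClosed_subset isClosed_closure
        (closure_minimal hCR isClosed_closedBall))
    exact ⟨p, ⟨closedBall_subset_closedBall (by linarith) (hCR hpC), fun h => hpO h.1⟩, hpC⟩

end NormedSpace

theorem stmt_3_general {d : ℕ} (O : Set (Euc d)) (hO : IsOpen O)
    (S : Set (Euc d)) (hSO : S ⊆ O) (hS : IsCompact S) :
    {C : Set (Euc d) | ∃ x ∈ (infill O S)ᶜ,
        C = connectedComponentIn ((infill O S)ᶜ) x}.Finite := by
  obtain ⟨δ, hδ, hδO⟩ := hS.exists_thickening_subset_open hO hSO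
  obtain ⟨R₀, hR₀⟩ := hS.isBounded.subset_closedBall 0
  set R := max R₀ 0
  have hR : 0 ≤ R := le_max_right _ _
  have hKR : infill O S ⊆ closedBall 0 R := infill_subset_closedBall hO hS.isClosed hR
    (hR₀.trans (closedBall_subset_closedBall (le_max_left _ _)))
  have hV : thickening δ Oᶜ ∪ (closedBall 0 R)ᶜ ⊆ interior (infill O S)ᶜ :=
    interior_maximal (union_subset (infill_disjoint_thickening_compl hO hS.isClosed hδO
      |>.subset_compl_left) (compl_subset_compl.2 hKR))
      (isOpen_thickening.union isClosed_closedBall.isOpen_compl)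
  refine finite_connectedComponentIn_of_isCompact
    ((isCompact_closedBall 0 (R + 1)).diff (hO.inter isOpen_ball)) (fun p hp => hV ?_)
    fun x hx => exists_mem_connectedComponentIn_compl_infill hSO hR hKR hx
  rcases not_and_or.1 hp.2 with hpO | hpR
  exacts [Or.inl (self_subset_thickening hδ _ hpO),
    Or.inr fun h => hpR (closedBall_subset_ball (lt_add_one R) h)]

/-- For a compact subset `S` of an open set `O ⊆ ℝ^d`, the complement
`ℝ^d \ infill O S` has only finitely many connected components. -/
theorem stmt_3 {d : ℕ} (O : Set (Euc d)) (hO : IsOpen O) (hOne : O.Nonempty)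
    (S : Set (Euc d)) (hSO : S ⊆ O) (hS : IsCompact S) :
    {C : Set (Euc d) | ∃ x ∈ (infill O S)ᶜ,
        C = connectedComponentIn ((infill O S)ᶜ) x}.Finite :=
  stmt_3_general O hO S hSO hS
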